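/- If G is a König–Egerváry graph with a perfect matching, then the critical independent sets of G are exactly the crowns of G. -/

import Mathlib

open Finset

variable {V : Type*}

namespace CrownPaper

variable [Fintype V] [DecidableEq V]

/-- The (open) neighborhood of a finite set of vertices. -/
def nbrs (G : SimpleGraph V) [DecidableRel G.Adj] (A : Finset V) : Finset V :=
  univ.filter (fun v => ∃ a ∈ A, G.Adj v a)

/-- The closed neighborhood `N[A] = A ∪ N(A)`. -/
def closedNbrs (G : SimpleGraph V) [DecidableRel G.Adj] (A : Finset V) : Finset V :=
  A ∪ nbrs G A

/-- `S` is an independent set of `G`. -/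
def IsIndep (G : SimpleGraph V) (S : Finset V) : Prop :=
  ∀ a ∈ S, ∀ b ∈ S, ¬ G.Adj a b

/-- The difference `d(S) = |S| - |N(S)|`. -/
def diff (G : SimpleGraph V) [DecidableRel G.Adj] (S : Finset V) : ℤ :=
  (S.card : ℤ) - ((nbrs G S).card : ℤ)

/-- `S` is a critical independent set. -/
def IsCritIndep (G : SimpleGraph V) [DecidableRel G.Adj] (S : Finset V) : Prop :=
  IsIndep G S ∧ ∀ I : Finset V, IsIndep G I → diff G I ≤ diff G S

/-- `S` is a crown: an independent set with a matching from `N(S)` into `S`. -/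
def IsCrown (G : SimpleGraph V) [DecidableRel G.Adj] (S : Finset V) : Prop :=
  IsIndep G S ∧ ∃ f : V → V, (∀ v ∈ nbrs G S, f v ∈ S ∧ G.Adj v (f v)) ∧
    Set.InjOn f (nbrs G S : Set V)

/-- `S` is a local maximum independent set: a maximum independent set of `G[N[S]]`. -/
def IsLocalMaxIndep (G : SimpleGraph V) [DecidableRel G.Adj] (S : Finset V) : Prop :=
  IsIndep G S ∧ ∀ I : Finset V, IsIndep G I → I ⊆ closedNbrs G S → I.card ≤ S.card

/-- The independence number. -/
noncomputable def alpha (G : SimpleGraph V) : ℕ :=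
  sSup {n | ∃ S : Finset V, IsIndep G S ∧ S.card = n}

/-- `M` is a matching of `G`, given as a finite set of (ordered) edges. -/
def IsMatching (G : SimpleGraph V) (M : Finset (V × V)) : Prop :=
  (∀ e ∈ M, G.Adj e.1 e.2) ∧
  ∀ e ∈ M, ∀ e' ∈ M, e ≠ e' →
    e.1 ≠ e'.1 ∧ e.1 ≠ e'.2 ∧ e.2 ≠ e'.1 ∧ e.2 ≠ e'.2

/-- The matching number. -/
noncomputable def mu (G : SimpleGraph V) : ℕ :=
  sSup {n | ∃ M : Finset (V × V), IsMatching G M ∧ M.card = n}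

/-- `G` has a perfect matching. -/
def HasPerfectMatching (G : SimpleGraph V) : Prop :=
  ∃ M : Finset (V × V), IsMatching G M ∧ ∀ v : V, ∃ e ∈ M, v = e.1 ∨ v = e.2

/-- `G` is a König–Egerváry graph: `α(G) + μ(G) = |V(G)|`. -/
def IsKonigEgervary (G : SimpleGraph V) : Prop :=
  alpha G + mu G = Fintype.card V

/-- `G` is bipartite. -/
def IsBipartite (G : SimpleGraph V) : Prop :=
  ∃ X : Set V, ∀ a b : V, G.Adj a b → (a ∈ X ↔ b ∉ X)

end CrownPaper

open CrownPaper

/-!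
With a perfect matching every vertex has a distinct partner among its neighbours, so
`|I| ≤ |N(I)|` for every `I` and no independent set has positive difference. A crown `S` has
`|N(S)| ≤ |S|`, hence difference `0`, and is therefore critical.

Conversely, in any graph a critical independent set `S` satisfies Hall's condition for matching
`N(S)` into `S`: for `T ⊆ N(S)`, the independent set `S \ N(T)` has its neighbourhood inside
`N(S) \ T`, and comparing its difference with that of `S` gives `|T| ≤ |S ∩ N(T)|`.
-/

namespace CrownPaper

theorem IsIndep.mono {G : SimpleGraph V} {S T : Finset V} (hS : IsIndep G S) (hTS : T ⊆ S) :
    IsIndep G T :=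
  fun a ha b hb => hS a (hTS ha) b (hTS hb)

theorem IsMatching.eq_of_mem_of_mem {G : SimpleGraph V} {M : Finset (V × V)} (hM : IsMatching G M)
    {e e' : V × V} (he : e ∈ M) (he' : e' ∈ M) {w : V} (hw : w = e.1 ∨ w = e.2)
    (hw' : w = e'.1 ∨ w = e'.2) : e = e' := by
  by_contra hne
  have := hM.2 e he e' he' hne
  grind

theorem HasPerfectMatching.exists_injective_adj {G : SimpleGraph V} (hPM : HasPerfectMatching G) :
    ∃ p : V → V, Function.Injective p ∧ ∀ v, G.Adj v (p v) := by
  obtain ⟨M, hM, hcover⟩ := hPM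
  have hpartner : ∀ v, ∃ w, ∃ e ∈ M, e = (v, w) ∨ e = (w, v) := fun v => by
    obtain ⟨e, he, hv | hv⟩ := hcover v
    · exact ⟨e.2, e, he, Or.inl (by rw [hv])⟩
    · exact ⟨e.1, e, he, Or.inr (by rw [hv])⟩
  choose p e he hep using hpartner
  have hadj : ∀ v, G.Adj v (p v) := fun v => by
    rcases hep v with h | h
    · simpa [h] using hM.1 _ (he v)
    · simpa [h] using (hM.1 _ (he v)).symm
  refine ⟨p, fun u v huv => ?_, hadj⟩
  have hee : e u = e v := hM.eq_of_mem_of_mem (he u) (he v) (w := p u)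
    (by rcases hep u with h | h <;> simp [h]) (by rcases hep v with h | h <;> simp [h, huv])
  have hne : u ≠ p u := (hadj u).ne
  rcases hep u with hu | hu <;> rcases hep v with hv | hv <;> grind

section Neighbourhoods

variable [Fintype V] {G : SimpleGraph V} [DecidableRel G.Adj]

@[simp]
theorem mem_nbrs {A : Finset V} {v : V} : v ∈ nbrs G A ↔ ∃ a ∈ A, G.Adj v a := by
  simp [nbrs]

theorem HasPerfectMatching.card_le_card_nbrs (hPM : HasPerfectMatching G) (I : Finset V) :
    #I ≤ #(nbrs G I) := by
  obtain ⟨p, hp_inj, hp_adj⟩ := hPM.exists_injective_adj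
  exact card_le_card_of_injOn p (fun v hv => mem_nbrs.mpr ⟨v, hv, (hp_adj v).symm⟩) hp_inj.injOn

theorem IsCrown.card_nbrs_le {S : Finset V} (hS : IsCrown G S) : #(nbrs G S) ≤ #S := by
  obtain ⟨-, f, hf, hf_inj⟩ := hS
  exact card_le_card_of_injOn f (fun v hv => (hf v hv).1) hf_inj

theorem IsCrown.isCritIndep {S : Finset V} (hS : IsCrown G S) (hPM : HasPerfectMatching G) :
    IsCritIndep G S := by
  refine ⟨hS.1, fun I _ => ?_⟩
  have hI := hPM.card_le_card_nbrs I
  have hS' := hS.card_nbrs_le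
  unfold diff
  omega

section DecidableEq

variable [DecidableEq V]

theorem nbrs_sdiff_nbrs_subset (S T : Finset V) : nbrs G (S \ nbrs G T) ⊆ nbrs G S \ T := by
  intro v hv
  obtain ⟨a, ha, hva⟩ := mem_nbrs.mp hv
  rw [mem_sdiff, mem_nbrs] at ha
  refine mem_sdiff.mpr ⟨mem_nbrs.mpr ⟨a, ha.1, hva⟩, fun hvT => ha.2 ?_⟩
  exact ⟨v, hvT, hva.symm⟩

theorem IsCritIndep.card_inter_nbrs_le {S : Finset V} (hS : IsCritIndep G S) (T : Finset V) :
    #(T ∩ nbrs G S) ≤ #(S ∩ nbrs G T) := by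
  have hcrit := hS.2 (S \ nbrs G T) (hS.1.mono sdiff_subset)
  have hnbrs := card_le_card (nbrs_sdiff_nbrs_subset (G := G) S T)
  have hS' := card_sdiff_add_card_inter S (nbrs G T)
  have hN := card_sdiff_add_card_inter (nbrs G S) T
  rw [inter_comm] at hN
  unfold diff at hcrit
  omega

theorem IsIndep.isCrown_of_forall_card_le {S : Finset V} (hS : IsIndep G S)
    (hHall : ∀ T ⊆ nbrs G S, #T ≤ #(S ∩ nbrs G T)) : IsCrown G S := by
  obtain ⟨f, hf_inj, hf⟩ :=
    (Fintype.all_card_le_filter_rel_iff_exists_injective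
      (fun (v : nbrs G S) (w : V) => w ∈ S ∧ G.Adj v w)).mp fun A => by
      calc #A = #(A.map (Function.Embedding.subtype _)) := (card_map _).symm
        _ ≤ #(S ∩ nbrs G (A.map (Function.Embedding.subtype _))) := hHall _ fun w hw => by
          obtain ⟨a, -, rfl⟩ := mem_map.mp hw
          exact a.2
        _ ≤ _ := card_le_card fun w hw => by
          simp only [mem_inter, mem_nbrs, mem_map, Function.Embedding.coe_subtype] at hw
          obtain ⟨hwS, _, ⟨a, haA, rfl⟩, hwa⟩ := hw
          exact mem_filter.mpr ⟨mem_univ _, a, haA, hwS, hwa.symm⟩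
  refine ⟨hS, fun v => if h : v ∈ nbrs G S then f ⟨v, h⟩ else v, fun v hv => ?_, ?_⟩
  · simp only [dif_pos hv]
    exact hf ⟨v, hv⟩
  · intro u hu v hv huv
    simp only [dif_pos (mem_coe.mp hu), dif_pos (mem_coe.mp hv)] at huv
    exact congrArg Subtype.val (hf_inj huv)

end DecidableEq

theorem IsCritIndep.isCrown {S : Finset V} (hS : IsCritIndep G S) : IsCrown G S := by
  classical
  refine hS.1.isCrown_of_forall_card_le fun T hT => ?_
  simpa [inter_eq_left.mpr hT] using hS.card_inter_nbrs_le T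

end Neighbourhoods

end CrownPaper

theorem ke_perfect_matching_crit_eq_crown_general (G : SimpleGraph V) [Fintype V]
    [DecidableRel G.Adj] (hPM : HasPerfectMatching G) :
    ∀ S : Finset V, IsCritIndep G S ↔ IsCrown G S :=
  fun _ => ⟨IsCritIndep.isCrown, fun hS => hS.isCritIndep hPM⟩

theorem ke_perfect_matching_crit_eq_crown (G : SimpleGraph V) [Fintype V] [DecidableEq V]
    [DecidableRel G.Adj] (hKE : IsKonigEgervary G) (hPM : HasPerfectMatching G) :
    ∀ S : Finset V, IsCritIndep G S ↔ IsCrown G S :=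
  ke_perfect_matching_crit_eq_crown_general G hPM
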